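/- The bracket on n satisfies the Jacobi identity, so n is a Lie algebra; the decomposition n = n₋₂ ⊕ n₋₁ is a Lie algebra grading with [n₋₁, n₋₁] ⊆ n₋₂ and n₋₂ central, so n is 2-step nilpotent; and the bracket map Λ²n₋₁ → n₋₂ is surjective, i.e. n is generated as a Lie algebra by n₋₁. Thus n is a fundamental graded Lie algebra with graded dimensions (4, 3) in degrees (−1, −2). -/

import Mathlib

noncomputable section

open Module TensorProduct

/-- The symmetric tensors `Sym²U′` inside `U′ ⊗ U′`. -/
def sym2sub (U' : Type*) [AddCommGroup U'] [Module ℝ U'] :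
    Submodule ℝ (TensorProduct ℝ U' U') :=
  LinearMap.ker ((TensorProduct.comm ℝ U' U').toLinearMap - LinearMap.id)

/-- The bracket on `n = n₋₂ ⊕ n₋₁ = Sym²U′ ⊕ (U′ ⊗ Q)` (realized inside
`(U′ ⊗ U′) × (U′ ⊗ Q)`) : `n₋₂` is central, and the bracket of `n₋₁` elements is
given by the bilinear map `b`. -/
def nbr {U' Q : Type*} [AddCommGroup U'] [Module ℝ U'] [AddCommGroup Q] [Module ℝ Q]
    (b : TensorProduct ℝ U' Q →ₗ[ℝ] TensorProduct ℝ U' Q →ₗ[ℝ] TensorProduct ℝ U' U')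
    (p q : TensorProduct ℝ U' U' × TensorProduct ℝ U' Q) :
    TensorProduct ℝ U' U' × TensorProduct ℝ U' Q :=
  (b p.2 q.2, 0)

/-! The identities are forced by the formula on pure tensors: alternation of `α` makes `b`
skew, the factor `u ⊗ u' + u' ⊗ u` makes its values symmetric, and for `α q₀ q₁ = 1` the
brackets `[u ⊗ q₀, u' ⊗ q₁]` give every symmetrization `w + τ w` (`τ` the swap of `U' ⊗ U'`),
which span `Sym²U'` since `2` is invertible. As `nbr` has zero `n₋₁`-component, every iterated
bracket vanishes. Finally `τ - 1` has rank one (its image is spanned by `e₁ ⊗ e₀ - e₀ ⊗ e₁`),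
so its kernel has dimension `4 - 1 = 3`. -/

def IsSymTensorBracket {R U Q : Type*} [CommRing R] [AddCommGroup U] [Module R U]
    [AddCommGroup Q] [Module R Q]
    (α : Q →ₗ[R] Q →ₗ[R] R) (b : U ⊗[R] Q →ₗ[R] U ⊗[R] Q →ₗ[R] U ⊗[R] U) : Prop :=
  ∀ (u u' : U) (q q' : Q), b (u ⊗ₜ q) (u' ⊗ₜ q') = α q q' • (u ⊗ₜ u' + u' ⊗ₜ u)

namespace IsSymTensorBracket

variable {R U Q : Type*} [CommRing R] [AddCommGroup U] [Module R U]
  [AddCommGroup Q] [Module R Q]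
  {α : Q →ₗ[R] Q →ₗ[R] R} {b : U ⊗[R] Q →ₗ[R] U ⊗[R] Q →ₗ[R] U ⊗[R] U}

theorem flip_eq_neg (hb : IsSymTensorBracket α b) (halt : α.IsAlt) : b.flip = -b := by
  ext u q u' q'
  simp [hb u' u q' q, hb u u' q q', ← halt.neg q q', add_comm]

theorem apply_swap (hb : IsSymTensorBracket α b) (halt : α.IsAlt) (x y : U ⊗[R] Q) :
    b x y = -b y x := by
  simpa using congr($(hb.flip_eq_neg halt) y x)

theorem comm_apply (hb : IsSymTensorBracket α b) (x y : U ⊗[R] Q) :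
    TensorProduct.comm R U U (b x y) = b x y := by
  have : b.compr₂ (TensorProduct.comm R U U).toLinearMap = b := by
    ext u q u' q'
    simp [hb u u' q q', add_comm]
  exact congr($this x y)

theorem add_comm_mem_span (hb : IsSymTensorBracket α b) {q₀ q₁ : Q} (h : α q₀ q₁ = 1)
    (w : U ⊗[R] U) :
    w + TensorProduct.comm R U U w ∈ Submodule.span R {t | ∃ x y, t = b x y} := by
  induction w using TensorProduct.induction_on with
  | zero => simp
  | tmul u u' => exact Submodule.subset_span ⟨u ⊗ₜ q₀, u' ⊗ₜ q₁, by simp [hb u u' q₀ q₁, h]⟩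
  | add w₁ w₂ h₁ h₂ =>
    rw [map_add, add_add_add_comm]
    exact Submodule.add_mem _ h₁ h₂

end IsSymTensorBracket

theorem mem_sym2sub_iff {U : Type*} [AddCommGroup U] [Module ℝ U] {z : U ⊗[ℝ] U} :
    z ∈ sym2sub U ↔ TensorProduct.comm ℝ U U z = z := by
  simp [sym2sub, sub_eq_zero]

theorem IsSymTensorBracket.span_eq_sym2sub {U Q : Type*} [AddCommGroup U] [Module ℝ U]
    [AddCommGroup Q] [Module ℝ Q] {α : Q →ₗ[ℝ] Q →ₗ[ℝ] ℝ}
    {b : U ⊗[ℝ] Q →ₗ[ℝ] U ⊗[ℝ] Q →ₗ[ℝ] U ⊗[ℝ] U} (hb : IsSymTensorBracket α b) (hα : α ≠ 0) :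
    Submodule.span ℝ {t | ∃ x y, t = b x y} = sym2sub U := by
  obtain ⟨q₀, q, hq⟩ : ∃ q₀ q, α q₀ q ≠ 0 := by
    by_contra! h
    exact hα (LinearMap.ext₂ h)
  have h₁ : α q₀ ((α q₀ q)⁻¹ • q) = 1 := by simp [hq]
  refine le_antisymm (Submodule.span_le.2 ?_) fun z hz ↦ ?_
  · rintro _ ⟨x, y, rfl⟩
    exact mem_sym2sub_iff.2 (hb.comm_apply x y)
  · have hz' : z = (2⁻¹ : ℝ) • (z + TensorProduct.comm ℝ U U z) := by
      rw [mem_sym2sub_iff.1 hz, ← two_smul ℝ z, smul_smul]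
      norm_num
    rw [hz']
    exact Submodule.smul_mem _ _ (hb.add_comm_mem_span h₁ z)

theorem range_comm_sub_id_eq_span {R U : Type*} [CommRing R] [AddCommGroup U] [Module R U]
    (e : Basis (Fin 2) R U) :
    LinearMap.range ((TensorProduct.comm R U U).toLinearMap - LinearMap.id) =
      R ∙ (e 1 ⊗ₜ e 0 - e 0 ⊗ₜ e 1) := by
  refine le_antisymm ?_ ?_
  · rw [LinearMap.range_eq_map, ← (e.tensorProduct e).span_eq, Submodule.map_span,
      Submodule.span_le]
    rintro _ ⟨_, ⟨⟨i, j⟩, rfl⟩, rfl⟩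
    fin_cases i <;> fin_cases j <;>
      simp only [Basis.tensorProduct_apply, LinearMap.sub_apply, LinearEquiv.coe_coe,
        TensorProduct.comm_tmul, LinearMap.id_apply, Fin.zero_eta, Fin.mk_one, sub_self]
    · exact zero_mem _
    · exact Submodule.mem_span_singleton_self _
    · exact neg_sub (e 1 ⊗ₜ[R] e 0) _ ▸ Submodule.neg_mem _ (Submodule.mem_span_singleton_self _)
    · exact zero_mem _
  · rw [Submodule.span_le, Set.singleton_subset_iff]
    exact ⟨e 0 ⊗ₜ e 1, by simp⟩

theorem finrank_sym2sub {U : Type*} [AddCommGroup U] [Module ℝ U] (hU : finrank ℝ U = 2) :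
    finrank ℝ (sym2sub U) = 3 := by
  have : Module.Finite ℝ U := Module.finite_of_finrank_eq_succ hU
  let e := Module.finBasisOfFinrankEq ℝ U hU
  have hv : e 1 ⊗ₜ[ℝ] e 0 - e 0 ⊗ₜ e 1 ≠ 0 := by
    simpa [sub_ne_zero, Basis.tensorProduct_apply] using
      (e.tensorProduct e).injective.ne (show ((1, 0) : Fin 2 × Fin 2) ≠ (0, 1) by decide)
  have := LinearMap.finrank_range_add_finrank_ker
    ((TensorProduct.comm ℝ U U).toLinearMap - LinearMap.id)
  rw [range_comm_sub_id_eq_span e, finrank_span_singleton hv, finrank_tensorProduct, hU] at this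
  exact Nat.add_left_cancel (this.trans (by norm_num : 2 * 2 = 1 + 3))

section Bracket

variable {U' Q : Type*} [AddCommGroup U'] [Module ℝ U'] [AddCommGroup Q] [Module ℝ Q]
  (b : TensorProduct ℝ U' Q →ₗ[ℝ] TensorProduct ℝ U' Q →ₗ[ℝ] TensorProduct ℝ U' U')

theorem nbr_snd (p q : TensorProduct ℝ U' U' × TensorProduct ℝ U' Q) : (nbr b p q).2 = 0 := rfl

theorem nbr_eq_zero_of_snd_left {p q : TensorProduct ℝ U' U' × TensorProduct ℝ U' Q}
    (hp : p.2 = 0) : nbr b p q = 0 := by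
  simp [nbr, hp]

theorem nbr_eq_zero_of_snd_right {p q : TensorProduct ℝ U' U' × TensorProduct ℝ U' Q}
    (hq : q.2 = 0) : nbr b p q = 0 := by
  simp [nbr, hq]

end Bracket

theorem n47_fundamental_graded
    (U' Q : Type*) [AddCommGroup U'] [Module ℝ U'] [AddCommGroup Q] [Module ℝ Q]
    (hU : finrank ℝ U' = 2) (hQ : finrank ℝ Q = 2)
    (α : Q →ₗ[ℝ] Q →ₗ[ℝ] ℝ)
    (halt : ∀ q, α q q = 0)
    (hnd : ∀ q, (∀ q', α q q' = 0) → q = 0)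
    (b : TensorProduct ℝ U' Q →ₗ[ℝ] TensorProduct ℝ U' Q →ₗ[ℝ] TensorProduct ℝ U' U')
    (hb : ∀ (u u' : U') (qq qq' : Q),
      b (u ⊗ₜ[ℝ] qq) (u' ⊗ₜ[ℝ] qq') = α qq qq' • (u ⊗ₜ[ℝ] u' + u' ⊗ₜ[ℝ] u)) :
    -- the bracket is skew-symmetric
    (∀ x y, b x y = - b y x) ∧
    -- grading: [n₋₁, n₋₁] ⊆ n₋₂ = Sym²U′
    (∀ x y, b x y ∈ sym2sub U') ∧
    -- Jacobi identity: n is a Lie algebra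
    (∀ p q r : TensorProduct ℝ U' U' × TensorProduct ℝ U' Q,
      nbr b p (nbr b q r) + nbr b q (nbr b r p) + nbr b r (nbr b p q) = 0) ∧
    -- n₋₂ is central
    (∀ p q : TensorProduct ℝ U' U' × TensorProduct ℝ U' Q,
      q.2 = 0 → nbr b p q = 0 ∧ nbr b q p = 0) ∧
    -- n is 2-step nilpotent
    (∀ p q r : TensorProduct ℝ U' U' × TensorProduct ℝ U' Q,
      nbr b (nbr b p q) r = 0) ∧
    -- n is generated by n₋₁: the bracket map Λ²n₋₁ → n₋₂ is surjective
    (Submodule.span ℝ {t | ∃ x y, t = b x y} = sym2sub U') ∧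
    -- graded dimensions (4,3) in degrees (−1,−2)
    (finrank ℝ (TensorProduct ℝ U' Q) = 4 ∧ finrank ℝ ↥(sym2sub U') = 3) := by
  have hb : IsSymTensorBracket α b := hb
  have hα : α ≠ 0 :=
    have : Nontrivial Q := Module.nontrivial_of_finrank_eq_succ hQ
    LinearMap.SeparatingLeft.ne_zero hnd
  have : Module.Finite ℝ U' := Module.finite_of_finrank_eq_succ hU
  have : Module.Finite ℝ Q := Module.finite_of_finrank_eq_succ hQ
  refine ⟨hb.apply_swap halt, fun x y ↦ mem_sym2sub_iff.2 (hb.comm_apply x y), fun p q r ↦ ?_,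
    fun p q hq ↦ ⟨nbr_eq_zero_of_snd_right b hq, nbr_eq_zero_of_snd_left b hq⟩,
    fun p q r ↦ nbr_eq_zero_of_snd_left b (nbr_snd b p q), hb.span_eq_sym2sub hα,
    by rw [finrank_tensorProduct, hU, hQ], finrank_sym2sub hU⟩
  simp only [nbr_eq_zero_of_snd_right b (nbr_snd b _ _), add_zero]
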